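/- Let f be a Fréchet-differentiable function of weights W = (w^(1), …, w^(m)) and parameters g that is positively scale-invariant in W, and suppose every block w^(i) is nonzero. Let V = (w^(1)/‖w^(1)‖, …, w^(m)/‖w^(m)‖) be the blockwise-normalized weights. Then for every index i, ∇_{w^(i)} f(W, g) = (1/‖w^(i)‖) · ∇_{w^(i)} f(V, g), where the right-hand gradient is taken at (V, g). -/

import Mathlib

open MeasureTheory RealInnerProductSpace
open scoped BigOperators

noncomputable section

/-- The space of weight tuples `W = (w⁽¹⁾, …, w⁽ᵐ⁾)` with `w⁽ⁱ⁾ ∈ ℝ^{dᵢ}`. -/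
abbrev Wsp (m : ℕ) (d : Fin m → ℕ) : Type :=
  PiLp 2 fun i : Fin m => EuclideanSpace ℝ (Fin (d i))

/-- The space of extra parameters `g ∈ ℝᵖ`. -/
abbrev Gsp (p : ℕ) : Type := EuclideanSpace ℝ (Fin p)

/-- Blockwise positive rescaling `T_a(W) = (a₁ w⁽¹⁾, …, a_m w⁽ᵐ⁾)`. -/
def rescale {m : ℕ} {d : Fin m → ℕ} (a : Fin m → ℝ) (W : Wsp m d) : Wsp m d :=
  WithLp.toLp 2 fun i => a i • W i

/-- `f` is positively scale-invariant in the weights. -/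
def PSI {m p : ℕ} {d : Fin m → ℕ} (f : Wsp m d → Gsp p → ℝ) : Prop :=
  ∀ a : Fin m → ℝ, (∀ i, 0 < a i) → ∀ W g, f (rescale a W) g = f W g

/-- Partial (Fréchet) gradient of `f` in the `i`-th weight block. -/
def gradW {m p : ℕ} {d : Fin m → ℕ} (f : Wsp m d → Gsp p → ℝ)
    (W : Wsp m d) (g : Gsp p) (i : Fin m) : EuclideanSpace ℝ (Fin (d i)) :=
  gradient (fun v => f (WithLp.toLp 2 (Function.update W.ofLp i v)) g) (W i)


/-- Blockwise normalization `V = (w⁽¹⁾/‖w⁽¹⁾‖, …, w⁽ᵐ⁾/‖w⁽ᵐ⁾‖)`. -/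
def normalizeW {m : ℕ} {d : Fin m → ℕ} (W : Wsp m d) : Wsp m d :=
  WithLp.toLp 2 fun i => ‖W i‖⁻¹ • W i

/-! Rescaling by `a_j = ‖w⁽ʲ⁾‖⁻¹` maps `W` to `V`, so by scale invariance the restriction of
`f(·, g)` to the `i`-th block through `W` is the restriction through `V` precomposed with
`v ↦ ‖w⁽ⁱ⁾‖⁻¹ v`; the chain rule for this linear map produces the factor `1/‖w⁽ⁱ⁾‖`. -/

theorem gradient_comp_smul {F : Type*} [NormedAddCommGroup F] [InnerProductSpace ℝ F]
    [CompleteSpace F] (h : F → ℝ) (c : ℝ) (x : F) :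
    gradient (fun v => h (c • v)) x = c • gradient h (c • x) := by
  rw [gradient, gradient, fderiv_comp_smul, map_smul]

def blockSlice {m p : ℕ} {d : Fin m → ℕ} (f : Wsp m d → Gsp p → ℝ) (W : Wsp m d) (g : Gsp p)
    (i : Fin m) (v : EuclideanSpace ℝ (Fin (d i))) : ℝ :=
  f (WithLp.toLp 2 (Function.update W.ofLp i v)) g

theorem rescale_toLp_update {m : ℕ} {d : Fin m → ℕ} (a : Fin m → ℝ) (W : Wsp m d) (i : Fin m)
    (v : EuclideanSpace ℝ (Fin (d i))) :
    rescale a (WithLp.toLp 2 (Function.update W.ofLp i v)) =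
      WithLp.toLp 2 (Function.update (rescale a W).ofLp i (a i • v)) := by
  ext j : 1
  rcases eq_or_ne j i with rfl | hj
  · simp [rescale]
  · simp [rescale, Function.update_of_ne hj]

theorem PSI.blockSlice_rescale {m p : ℕ} {d : Fin m → ℕ} {f : Wsp m d → Gsp p → ℝ} (hf : PSI f)
    {a : Fin m → ℝ} (ha : ∀ j, 0 < a j) (W : Wsp m d) (g : Gsp p) (i : Fin m)
    (v : EuclideanSpace ℝ (Fin (d i))) :
    blockSlice f (rescale a W) g i (a i • v) = blockSlice f W g i v := by
  rw [blockSlice, ← rescale_toLp_update, hf a ha, blockSlice]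

theorem stmt1_general {m p : ℕ} {d : Fin m → ℕ} (f : Wsp m d → Gsp p → ℝ)
    (hPSI : PSI f)
    (W : Wsp m d) (hW : ∀ j, W j ≠ 0) (g : Gsp p) (i : Fin m) :
    gradW f W g i = (1 / ‖W i‖) • gradW f (normalizeW W) g i := by
  have hV : normalizeW W = rescale (fun j => ‖W j‖⁻¹) W := rfl
  have hslice : blockSlice f W g i = fun v => blockSlice f (normalizeW W) g i (‖W i‖⁻¹ • v) := by
    funext v
    rw [hV, hPSI.blockSlice_rescale fun j => inv_pos.mpr (norm_pos_iff.mpr (hW j))]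
  calc gradW f W g i = gradient (blockSlice f W g i) (W i) := rfl
    _ = ‖W i‖⁻¹ • gradient (blockSlice f (normalizeW W) g i) (‖W i‖⁻¹ • W i) := by
      rw [hslice, gradient_comp_smul]
    _ = (1 / ‖W i‖) • gradW f (normalizeW W) g i := by rw [one_div]; rfl

/-- For a Fréchet-differentiable, positively scale-invariant `f` and
weights with nonzero blocks, `∇_{w⁽ⁱ⁾} f(W, g) = (1/‖w⁽ⁱ⁾‖) • ∇_{w⁽ⁱ⁾} f(V, g)` where
`V` is the blockwise normalization of `W`. -/
theorem stmt1 {m p : ℕ} {d : Fin m → ℕ} (f : Wsp m d → Gsp p → ℝ)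
    (hdiff : Differentiable ℝ fun q : Wsp m d × Gsp p => f q.1 q.2)
    (hPSI : PSI f)
    (W : Wsp m d) (hW : ∀ j, W j ≠ 0) (g : Gsp p) (i : Fin m) :
    gradW f W g i = (1 / ‖W i‖) • gradW f (normalizeW W) g i :=
  stmt1_general f hPSI W hW g i

end
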